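/- arXiv:1801.00589 — 3 statements merged into one kernel-verified Lean document; each statement's English description precedes it below -/
import Mathlib

section
/- Let A be a unital associative (possibly noncommutative) ring, let Δ, Γ, Ω be invertible n×n matrices over A, θ an m×n matrix and η an n×m matrix over A satisfying the Sylvester-type relation ΓΩ − ΩΔ = ηθ, and set Φ_{i,j} := θ Δ^i Ω^{-1} Γ^j η for i, j ∈ ℤ. Then for all i, j ∈ ℤ one has Φ_{i+1,j} − Φ_{i,j+1} + Φ_{i,0} Φ_{0,j} = 0. -/
/-- `Φ_{i,j} = θ Δ^i Ω̂^{-1} Γ^j η`, with negative powers of the invertible matrices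
`Δ`, `Γ` given by powers of their inverses. -/
def Phi {A : Type} [Ring A] {m n : ℕ} (θ : Matrix (Fin m) (Fin n) A)
    (η : Matrix (Fin n) (Fin m) A) (Δ Γ W : (Matrix (Fin n) (Fin n) A)ˣ) (i j : ℤ) :
    Matrix (Fin m) (Fin m) A :=
  θ * Units.val (Δ ^ i) * Units.val W⁻¹ * Units.val (Γ ^ j) * η

set_option maxHeartbeats 1000000 in
/-- if `ΓΩ − ΩΔ = ηθ` then `Φ_{i+1,j} − Φ_{i,j+1} + Φ_{i,0} Φ_{0,j} = 0`
for all `i, j ∈ ℤ`. -/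
theorem Phi_recurrence {A : Type} [Ring A] {m n : ℕ}
    (Δ Γ W : (Matrix (Fin n) (Fin n) A)ˣ)
    (θ : Matrix (Fin m) (Fin n) A) (η : Matrix (Fin n) (Fin m) A)
    (hSyl : Units.val Γ * Units.val W - Units.val W * Units.val Δ = η * θ) :
    ∀ i j : ℤ,
      Phi θ η Δ Γ W (i + 1) j - Phi θ η Δ Γ W i (j + 1)
        + Phi θ η Δ Γ W i 0 * Phi θ η Δ Γ W 0 j = 0 := by
  intro i j
  have bracket : Units.val Δ * Units.val W⁻¹ - Units.val W⁻¹ * Units.val Γ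
      + Units.val W⁻¹ * (η * θ) * Units.val W⁻¹ = 0 := by
    rw [← hSyl]
    simp only [mul_sub, sub_mul, mul_assoc, Units.mul_inv_cancel_left,
      Units.inv_mul_cancel_left, Units.mul_inv, Units.inv_mul, mul_one, one_mul]
    abel
  have expand :
      Phi θ η Δ Γ W (i + 1) j - Phi θ η Δ Γ W i (j + 1)
        + Phi θ η Δ Γ W i 0 * Phi θ η Δ Γ W 0 j
      = θ * Units.val (Δ ^ i) *
          ((Units.val Δ * Units.val W⁻¹ - Units.val W⁻¹ * Units.val Γ
            + Units.val W⁻¹ * (η * θ) * Units.val W⁻¹) * Units.val (Γ ^ j)) * η := by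
    simp only [Phi, zpow_add_one, show (j : ℤ) + 1 = 1 + j from add_comm j 1, zpow_one_add,
      zpow_zero, zpow_one, Units.val_mul, Units.val_one, Matrix.mul_one, Matrix.one_mul,
      Matrix.mul_add, Matrix.add_mul, Matrix.mul_sub, Matrix.sub_mul, Matrix.mul_assoc]
  rw [expand, bracket]
  simp only [Matrix.zero_mul, Matrix.mul_zero]
end

section
/- Let A be a unital associative (possibly noncommutative) ring, let Δ, Γ, Ω be invertible n×n matrices over A, θ an m×n matrix and η an n×m matrix over A satisfying ΓΩ − ΩΔ = ηθ, and set Φ_{i,j} := θ Δ^i Ω^{-1} Γ^j η for i, j ∈ ℤ. Then Φ_{-1,0} Φ_{0,-1} = Φ_{0,-1} Φ_{-1,0}. -/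
/-- if `ΓΩ − ΩΔ = ηθ` then `Φ_{-1,0} Φ_{0,-1} = Φ_{0,-1} Φ_{-1,0}`. -/
theorem Phi_neg_commute {A : Type} [Ring A] {m n : ℕ}
    (Δ Γ W : (Matrix (Fin n) (Fin n) A)ˣ)
    (θ : Matrix (Fin m) (Fin n) A) (η : Matrix (Fin n) (Fin m) A)
    (hSyl : Units.val Γ * Units.val W - Units.val W * Units.val Δ = η * θ) :
    Phi θ η Δ Γ W (-1) 0 * Phi θ η Δ Γ W 0 (-1)
      = Phi θ η Δ Γ W 0 (-1) * Phi θ η Δ Γ W (-1) 0 := by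
  have h : η * θ = Units.val Γ * Units.val W - Units.val W * Units.val Δ := hSyl.symm
  have l1 : (Units.val Δ⁻¹ * (Units.val W⁻¹ * ((η * θ) * (Units.val W⁻¹ * Units.val Γ⁻¹)))) =
      Units.val Δ⁻¹ * Units.val W⁻¹ - Units.val W⁻¹ * Units.val Γ⁻¹ := by
    rw [h]
    simp only [mul_sub, sub_mul, mul_assoc, Units.inv_mul_cancel_left, Units.mul_inv_cancel_left, Units.mul_inv, Units.inv_mul, mul_one, one_mul]
  have l2 : (Units.val W⁻¹ * (Units.val Γ⁻¹ * ((η * θ) * (Units.val Δ⁻¹ * Units.val W⁻¹)))) =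
      Units.val Δ⁻¹ * Units.val W⁻¹ - Units.val W⁻¹ * Units.val Γ⁻¹ := by
    rw [h]
    simp only [mul_sub, sub_mul, mul_assoc, Units.inv_mul_cancel_left, Units.mul_inv_cancel_left, Units.mul_inv, Units.inv_mul, mul_one, one_mul]
  simp only [Phi, zpow_neg, zpow_one, zpow_zero, Units.val_one, Matrix.mul_one, Matrix.one_mul]
  calc θ * Units.val Δ⁻¹ * Units.val W⁻¹ * η * (θ * Units.val W⁻¹ * Units.val Γ⁻¹ * η)
      = θ * (Units.val Δ⁻¹ * (Units.val W⁻¹ * ((η * θ) * (Units.val W⁻¹ * Units.val Γ⁻¹)))) * η := by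
        simp only [Matrix.mul_assoc]
    _ = θ * (Units.val W⁻¹ * (Units.val Γ⁻¹ * ((η * θ) * (Units.val Δ⁻¹ * Units.val W⁻¹)))) * η := by
        rw [l1, l2]
    _ = θ * Units.val W⁻¹ * Units.val Γ⁻¹ * η * (θ * Units.val Δ⁻¹ * Units.val W⁻¹ * η) := by
        simp only [Matrix.mul_assoc]
end

section
/- (Lemma, Section 5) Let A be a unital associative (possibly noncommutative) ring, let Δ, Γ, Ω be invertible n×n matrices over A, θ an m×n matrix and η an n×m matrix over A satisfying ΓΩ − ΩΔ = ηθ, and set Φ_{i,j} := θ Δ^i Ω^{-1} Γ^j η for i, j ∈ ℤ. Then for all i, j ∈ ℤ one has Φ_{i,-1} Φ_{-1,j} = Φ_{i-1,j} − Φ_{i,j-1}. -/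
/-- Lemma, Section 5: if `ΓΩ − ΩΔ = ηθ` then
`Φ_{i,-1} Φ_{-1,j} = Φ_{i-1,j} − Φ_{i,j-1}` for all `i, j ∈ ℤ`. -/
theorem Phi_lemma {A : Type} [Ring A] {m n : ℕ}
    (Δ Γ W : (Matrix (Fin n) (Fin n) A)ˣ)
    (θ : Matrix (Fin m) (Fin n) A) (η : Matrix (Fin n) (Fin m) A)
    (hSyl : Units.val Γ * Units.val W - Units.val W * Units.val Δ = η * θ) :
    ∀ i j : ℤ,
      Phi θ η Δ Γ W i (-1) * Phi θ η Δ Γ W (-1) j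
        = Phi θ η Δ Γ W (i - 1) j - Phi θ η Δ Γ W i (j - 1) := by
  intro i j
  have key : (W⁻¹ : _).val * ((Γ⁻¹ : (Matrix (Fin n) (Fin n) A)ˣ).val * (η * θ)
      * (Δ⁻¹ : (Matrix (Fin n) (Fin n) A)ˣ).val) * (W⁻¹ : _).val
      = (Δ⁻¹ : (Matrix (Fin n) (Fin n) A)ˣ).val * (W⁻¹ : _).val
        - (W⁻¹ : _).val * (Γ⁻¹ : (Matrix (Fin n) (Fin n) A)ˣ).val := by
    rw [← hSyl]
    simp only [mul_sub, sub_mul, mul_assoc, Units.inv_mul_cancel_left,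
      Units.mul_inv_cancel_left, Units.mul_inv, Units.inv_mul, mul_one]
  have hgam : ∀ k : ℤ, (Γ ^ (k - 1) : (Matrix (Fin n) (Fin n) A)ˣ)
      = Γ⁻¹ * Γ ^ k := by
    intro k
    rw [show k - 1 = -1 + k by ring, zpow_add, zpow_neg_one]
  have hdel : ∀ k : ℤ, (Δ ^ (k - 1) : (Matrix (Fin n) (Fin n) A)ˣ)
      = Δ ^ k * Δ⁻¹ := by
    intro k
    rw [zpow_sub_one]
  simp only [Phi, zpow_neg_one, hgam, hdel, Units.val_mul]
  calc θ * (Δ ^ i : _).val * (W⁻¹ : _).val * (Γ⁻¹ : (Matrix (Fin n) (Fin n) A)ˣ).val * η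
        * (θ * (Δ⁻¹ : (Matrix (Fin n) (Fin n) A)ˣ).val * (W⁻¹ : _).val * (Γ ^ j : _).val * η)
      = θ * (Δ ^ i : _).val
          * ((W⁻¹ : _).val * ((Γ⁻¹ : (Matrix (Fin n) (Fin n) A)ˣ).val * (η * θ)
            * (Δ⁻¹ : (Matrix (Fin n) (Fin n) A)ˣ).val) * (W⁻¹ : _).val)
          * (Γ ^ j : _).val * η := by simp only [Matrix.mul_assoc]
    _ = _ := by
        rw [key]
        simp only [Matrix.mul_sub, Matrix.sub_mul, Matrix.mul_assoc]
end
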